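/- arXiv:2604.04217 — 2 statements merged into one kernel-verified Lean document; each statement's English description precedes it below -/
import Mathlib

section
/- For points p, v ∈ ℝ³ with v ≠ 0, let ρ = ‖v‖, u = v/ρ. The second-order Taylor remainder bound: ‖v − p‖ = ρ − ⟨u, p⟩ + (‖p‖² − ⟨u,p⟩²)/(2ρ) + E, where |E| ≤ ‖p‖³/(2ρ²) whenever ‖p‖ ≤ ρ/2. -/
open scoped RealInnerProductSpace

open EuclideanSpace

/-!
Write ρ = ‖v‖, a = ⟪u, p⟫, n = ‖p‖ and D = ‖v - p‖. The law of cosines D² = ρ² - 2aρ + n² turns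
the claim into one about four reals. Rationalising gives the exact identity
E · 2ρ((D + ρ)² - a²) = (n² - a²)(4aρ - (n² - a²)). Since D ≥ ρ - a > 0 the denominator is at least
8ρ²(ρ - a), while 2|a|(n² - a²) ≤ n³ and n ≤ ρ/2 bound the numerator by 4n³(ρ - a).
-/

namespace Fresnel

variable {ρ D n a : ℝ}

lemma two_mul_abs_mul_sub_sq_le_pow_three (ha : |a| ≤ n) : 2 * |a| * (n ^ 2 - a ^ 2) ≤ n ^ 3 := by
  have h0 := abs_nonneg a
  rw [← sq_abs a]
  nlinarith [mul_nonneg h0 (sq_nonneg (n - 2 * |a|)),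
    mul_nonneg (sub_nonneg.2 ha) (sq_nonneg (n - |a|)), mul_nonneg (sub_nonneg.2 ha) (sq_nonneg |a|)]

lemma sub_le_of_sq_eq (hD : 0 ≤ D) (hD2 : D ^ 2 = ρ ^ 2 - 2 * a * ρ + n ^ 2) (ha : |a| ≤ n) :
    ρ - a ≤ D := by
  have hsq : a ^ 2 ≤ n ^ 2 := by rw [← sq_abs a]; exact pow_le_pow_left₀ (abs_nonneg a) ha 2
  exact abs_le_of_sq_le_sq' (by nlinarith) hD |>.2

lemma remainder_mul_eq (hρ : ρ ≠ 0) (hD2 : D ^ 2 = ρ ^ 2 - 2 * a * ρ + n ^ 2) :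
    (D - (ρ - a + (n ^ 2 - a ^ 2) / (2 * ρ))) * (2 * ρ * ((D + ρ) ^ 2 - a ^ 2))
      = (n ^ 2 - a ^ 2) * (4 * a * ρ - (n ^ 2 - a ^ 2)) := by
  field_simp
  linear_combination (2 * ρ * (D + ρ + a) - (n ^ 2 - a ^ 2)) * hD2

lemma abs_numerator_le (hρ : 0 < ρ) (ha : |a| ≤ n) (hn : n ≤ ρ / 2) :
    |(n ^ 2 - a ^ 2) * (4 * a * ρ - (n ^ 2 - a ^ 2))| ≤ 4 * n ^ 3 * (ρ - a) := by
  obtain ⟨ha₁, ha₂⟩ := abs_le.1 ha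
  set b := n ^ 2 - a ^ 2 with hb_def
  have hn0 : 0 ≤ n := (abs_nonneg a).trans ha
  have hb : 0 ≤ b := by nlinarith
  have hb_sq : b ^ 2 ≤ n ^ 3 * ρ / 2 := by
    have : b ≤ n ^ 2 := by nlinarith
    nlinarith [pow_le_pow_left₀ hb this 2, mul_le_mul_of_nonneg_left hn (pow_nonneg hn0 3)]
  have hab : 4 * |a| * b * ρ ≤ 2 * n ^ 3 * ρ := by
    nlinarith [mul_le_mul_of_nonneg_right (two_mul_abs_mul_sub_sq_le_pow_three ha) hρ.le]
  have hn3 : 0 ≤ n ^ 3 := pow_nonneg hn0 3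
  have hρa : 2 * n ^ 3 * ρ ≤ 4 * n ^ 3 * (ρ - a) := by
    nlinarith [mul_nonneg hn3 (by linarith : 0 ≤ ρ - 2 * a)]
  rw [show b * (4 * a * ρ - b) = 4 * a * b * ρ - b ^ 2 by ring, abs_le]
  rcases le_or_gt 0 a with h | h
  · rw [abs_of_nonneg h] at hab
    have : 0 ≤ a * b * ρ := by positivity
    constructor <;> nlinarith [mul_nonneg hn3 hρ.le]
  · rw [abs_of_neg h] at hab
    have : a * b * ρ ≤ 0 :=
      mul_nonpos_of_nonpos_of_nonneg (mul_nonpos_of_nonpos_of_nonneg h.le hb) hρ.le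
    constructor <;> nlinarith [mul_nonneg hn3 hρ.le, mul_nonneg hn3 (neg_nonneg.2 h.le)]

lemma abs_remainder_le (hρ : 0 < ρ) (hD : 0 ≤ D) (ha : |a| ≤ n) (hn : n ≤ ρ / 2)
    (hD2 : D ^ 2 = ρ ^ 2 - 2 * a * ρ + n ^ 2) :
    |D - (ρ - a + (n ^ 2 - a ^ 2) / (2 * ρ))| ≤ n ^ 3 / (2 * ρ ^ 2) := by
  have hn0 : 0 ≤ n := (abs_nonneg a).trans ha
  have hρa : 0 < ρ - a := by linarith [(abs_le.1 ha).2]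
  have hQ : 4 * ρ * (ρ - a) ≤ (D + ρ) ^ 2 - a ^ 2 := by
    nlinarith [sub_le_of_sq_eq hD hD2 ha]
  have hpos : 0 < 2 * ρ * ((D + ρ) ^ 2 - a ^ 2) := by
    have : 0 < 4 * ρ * (ρ - a) := by positivity
    positivity [this.trans_le hQ]
  rw [eq_div_of_mul_eq hpos.ne' (remainder_mul_eq hρ.ne' hD2), abs_div, abs_of_pos hpos]
  calc _ ≤ 4 * n ^ 3 * (ρ - a) / (2 * ρ * (4 * ρ * (ρ - a))) :=
        div_le_div₀ (by positivity) (abs_numerator_le hρ ha hn) (by positivity) (by gcongr)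
    _ = n ^ 3 / (2 * ρ ^ 2) := by field_simp

end Fresnel

section InnerProductSpace

variable {F : Type*} [NormedAddCommGroup F] [InnerProductSpace ℝ F]

lemma inner_inv_norm_smul_mul_norm (v p : F) : ⟪‖v‖⁻¹ • v, p⟫ * ‖v‖ = ⟪v, p⟫ := by
  rcases eq_or_ne v 0 with rfl | hv
  · simp
  · rw [real_inner_smul_left]
    field_simp

lemma abs_inner_inv_norm_smul_le (v p : F) : |⟪‖v‖⁻¹ • v, p⟫| ≤ ‖p‖ := by
  have hu : ‖‖v‖⁻¹ • v‖ ≤ 1 := by rw [norm_smul, norm_inv, norm_norm]; exact inv_mul_le_one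
  calc |⟪‖v‖⁻¹ • v, p⟫| ≤ ‖‖v‖⁻¹ • v‖ * ‖p‖ := abs_real_inner_le_norm _ _
    _ ≤ ‖p‖ := mul_le_of_le_one_left (norm_nonneg p) hu

end InnerProductSpace

/-- Second-order Fresnel expansion with remainder bound in ℝ³. -/
theorem fresnel_second_order (p v : EuclideanSpace ℝ (Fin 3)) (hv : v ≠ 0)
    (hp : ‖p‖ ≤ ‖v‖ / 2) :
    ∃ E : ℝ,
      ‖v - p‖ = ‖v‖ - ⟪(‖v‖)⁻¹ • v, p⟫
          + (‖p‖ ^ 2 - ⟪(‖v‖)⁻¹ • v, p⟫ ^ 2) / (2 * ‖v‖) + E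
        ∧ |E| ≤ ‖p‖ ^ 3 / (2 * ‖v‖ ^ 2) := by
  have hD2 : ‖v - p‖ ^ 2 = ‖v‖ ^ 2 - 2 * ⟪(‖v‖)⁻¹ • v, p⟫ * ‖v‖ + ‖p‖ ^ 2 := by
    rw [norm_sub_sq_real, mul_assoc, inner_inv_norm_smul_mul_norm]
  exact ⟨_, (add_sub_cancel _ _).symm, Fresnel.abs_remainder_le (norm_pos_iff.2 hv) (norm_nonneg _)
    (abs_inner_inv_norm_smul_le v p) hp hD2⟩
end

section
/- For v ∈ ℝⁿ with ‖v‖ = ρ > 0 and p ∈ ℝⁿ with ‖p‖ < ρ, the distance satisfies the two-sided bound ρ − ⟨u, p⟩ ≤ ‖v − p‖ ≤ ρ − ⟨u, p⟩ + ‖P⊥ p‖²/(2(ρ − ‖p‖)), where u = v/ρ and P⊥ p = p − ⟨u,p⟩u. -/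
/-!
Write `v = ρ • u` with `u` a unit vector and `a = ⟪u, p⟫`. Pythagoras splits the squared distance
as `‖v - p‖² = (ρ - a)² + ‖P⊥ p‖²`, which gives the lower bound at once. For the upper bound,
`‖v - p‖ - (ρ - a) = ‖P⊥ p‖² / (‖v - p‖ + (ρ - a))`, and both summands of the denominator are at
least `ρ - ‖p‖` (reverse triangle inequality and Cauchy–Schwarz).
-/

open scoped RealInnerProductSpace

namespace Real

variable {r d e : ℝ}

theorem le_of_sq_eq_sq_add (hr : 0 ≤ r) (he : 0 ≤ e) (h : r ^ 2 = d ^ 2 + e) : d ≤ r :=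
  (le_abs_self d).trans (abs_le_of_sq_le_sq (by linarith) hr)

theorem le_add_div_of_sq_eq_sq_add {c : ℝ} (hc : 0 < c) (hcd : c ≤ d) (hr : 0 ≤ r) (he : 0 ≤ e)
    (h : r ^ 2 = d ^ 2 + e) : r ≤ d + e / (2 * c) := by
  have hdr : d ≤ r := le_of_sq_eq_sq_add hr he h
  have key : (r - d) * (2 * c) ≤ e :=
    calc (r - d) * (2 * c) ≤ (r - d) * (r + d) := by gcongr; linarith
      _ = e := by linarith
  linarith [(le_div_iff₀ (by positivity)).mpr key]

end Real

section UnitVector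

variable {E : Type*} [NormedAddCommGroup E] [InnerProductSpace ℝ E] {u : E}

theorem norm_sub_inner_smul_sq (hu : ‖u‖ = 1) (p : E) :
    ‖p - ⟪u, p⟫ • u‖ ^ 2 = ‖p‖ ^ 2 - ⟪u, p⟫ ^ 2 := by
  rw [norm_sub_sq_real, real_inner_smul_right, real_inner_comm, norm_smul, Real.norm_eq_abs,
    hu, mul_pow, sq_abs]
  ring

theorem norm_smul_sub_sq_eq (hu : ‖u‖ = 1) (rho : ℝ) (p : E) :
    ‖rho • u - p‖ ^ 2 = (rho - ⟪u, p⟫) ^ 2 + ‖p - ⟪u, p⟫ • u‖ ^ 2 := by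
  rw [norm_sub_inner_smul_sq hu, norm_sub_sq_real, real_inner_smul_left, norm_smul,
    Real.norm_eq_abs, hu, mul_pow, sq_abs]
  ring

end UnitVector

/-- Two-sided near-field Fresnel bound on the distance ‖v − p‖. -/
theorem two_sided_fresnel_bound (n : ℕ) (v p : EuclideanSpace ℝ (Fin n))
    (rho : ℝ) (hrho : ‖v‖ = rho) (hrho0 : 0 < rho) (hp : ‖p‖ < rho) :
    rho - ⟪rho⁻¹ • v, p⟫ ≤ ‖v - p‖ ∧
    ‖v - p‖ ≤ rho - ⟪rho⁻¹ • v, p⟫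
        + ‖p - ⟪rho⁻¹ • v, p⟫ • (rho⁻¹ • v)‖ ^ 2 / (2 * (rho - ‖p‖)) := by
  set u := rho⁻¹ • v
  have hu : ‖u‖ = 1 := by
    rw [norm_smul, norm_inv, Real.norm_of_nonneg hrho0.le, hrho, inv_mul_cancel₀ hrho0.ne']
  have hv : v = rho • u := by rw [smul_inv_smul₀ hrho0.ne']
  have hsplit := norm_smul_sub_sq_eq hu rho p
  rw [← hv] at hsplit
  have hinner : ⟪u, p⟫ ≤ ‖p‖ := by simpa [hu] using real_inner_le_norm u p
  exact ⟨Real.le_of_sq_eq_sq_add (norm_nonneg _) (sq_nonneg _) hsplit,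
    Real.le_add_div_of_sq_eq_sq_add (sub_pos.mpr hp) (by linarith) (norm_nonneg _)
      (sq_nonneg _) hsplit⟩
end
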